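/- Condensate density of the mean-field Bose gas: fix β > 0, λ > 0, μ ∈ ℝ and ν ≥ 1. The map Δ ↦ p_λ^Δ(β,μ) is differentiable at every Δ₀ > 0 with μ ≠ −Δ₀ + λ·ρ^P(β, −Δ₀), and its derivative there equals (μ + Δ₀)/λ − ρ^P(β, −Δ₀) if μ > −Δ₀ + λ·ρ^P(β, −Δ₀), and equals 0 if μ < −Δ₀ + λ·ρ^P(β, −Δ₀). -/

import Mathlib

open MeasureTheory Filter

/-- Thermodynamic-limit pressure of the perfect Bose gas:
`p^P(β,μ) = -(1/(β (2π)^ν)) ∫ log(1 - e^{-β(|k|² - μ)}) dk`. -/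
noncomputable def pP (ν : ℕ) (β μ : ℝ) : ℝ :=
  -(1 / (β * (2 * Real.pi) ^ ν)) *
    ∫ k : EuclideanSpace ℝ (Fin ν), Real.log (1 - Real.exp (-(β * (‖k‖ ^ 2 - μ))))

/-- Thermodynamic-limit total density of the perfect Bose gas:
`ρ^P(β,μ) = (2π)^{-ν} ∫ (e^{β(|k|² - μ)} - 1)⁻¹ dk`. -/
noncomputable def rhoP (ν : ℕ) (β μ : ℝ) : ℝ :=
  ((2 * Real.pi) ^ ν)⁻¹ *
    ∫ k : EuclideanSpace ℝ (Fin ν), (Real.exp (β * (‖k‖ ^ 2 - μ)) - 1)⁻¹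

/-- Free energy of the perfect Bose gas with gap `Δ`:
`f^{P,Δ}(β,ρ) = sup_{μ ≤ -Δ} (ρ μ - p^P(β,μ))`. -/
noncomputable def fP (ν : ℕ) (β Δ ρ : ℝ) : ℝ :=
  sSup ((fun μ => ρ * μ - pP ν β μ) '' Set.Iic (-Δ))

/-- Grand-canonical pressure of the mean-field Bose gas with gap `Δ` and coupling `lam`:
`p_λ^Δ(β,μ) = sup_{ρ ≥ 0} (μ ρ - f^{P,Δ}(β,ρ) - λ ρ²/2)`. -/
noncomputable def pMF (ν : ℕ) (β lam Δ μ : ℝ) : ℝ :=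
  sSup ((fun ρ => μ * ρ - fP ν β Δ ρ - lam * ρ ^ 2 / 2) '' Set.Ici 0)

section Aux

lemma integrable_gauss (ν : ℕ) {b : ℝ} (hb : 0 < b) :
    Integrable fun k : EuclideanSpace ℝ (Fin ν) => Real.exp (-b * ‖k‖ ^ 2) := by
  have h := (GaussianFourier.integrable_cexp_neg_mul_sq_norm_add (b := (b : ℂ))
    (by simpa using hb) 0 (0 : EuclideanSpace ℝ (Fin ν))).norm
  have : (fun k : EuclideanSpace ℝ (Fin ν) =>
      ‖Complex.exp (-(b : ℂ) * (‖k‖ : ℂ) ^ 2 + 0 * (inner ℝ (0 : EuclideanSpace ℝ (Fin ν)) k : ℝ))‖)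
      = fun k : EuclideanSpace ℝ (Fin ν) => Real.exp (-b * ‖k‖ ^ 2) := by
    funext k
    rw [Complex.norm_exp]
    simp [← Complex.ofReal_pow, neg_mul]
  rwa [this] at h


lemma inv_bound {β c μ x : ℝ} (hβ : 0 < β) (hc : c < 0) (hμ : μ ≤ c) (hx : 0 ≤ x) :
    (Real.exp (β * (x - μ)) - 1)⁻¹ ≤
      (1 - Real.exp (β * c))⁻¹ * (Real.exp (β * c) * Real.exp (-β * x)) := by
  have hg : Real.exp (β * c) < 1 := Real.exp_lt_one_iff.2 (by nlinarith)
  have h2 : Real.exp (β * x) * Real.exp (-(β * c)) ≤ Real.exp (β * (x - μ)) := by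
    rw [← Real.exp_add]; exact Real.exp_le_exp.2 (by nlinarith)
  have key : (1 - Real.exp (β * c)) * (Real.exp (β * x) * Real.exp (-(β * c)))
      ≤ Real.exp (β * (x - μ)) - 1 := by
    have h1 : Real.exp (-(β * (x - μ))) ≤ Real.exp (β * c) := Real.exp_le_exp.2 (by nlinarith)
    have e : Real.exp (β * (x - μ)) - 1
        = Real.exp (β * (x - μ)) * (1 - Real.exp (-(β * (x - μ)))) := by
      rw [mul_one_sub, ← Real.exp_add, add_neg_cancel, Real.exp_zero]
    rw [e]
    have hE : 0 < Real.exp (β * (x - μ)) := Real.exp_pos _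
    calc (1 - Real.exp (β * c)) * (Real.exp (β * x) * Real.exp (-(β * c)))
        ≤ (1 - Real.exp (β * c)) * Real.exp (β * (x - μ)) :=
          mul_le_mul_of_nonneg_left h2 (by linarith)
      _ ≤ Real.exp (β * (x - μ)) * (1 - Real.exp (-(β * (x - μ)))) := by nlinarith
  have hpos : 0 < (1 - Real.exp (β * c)) * (Real.exp (β * x) * Real.exp (-(β * c))) := by
    have h0 : 0 < 1 - Real.exp (β * c) := by linarith
    positivity
  refine (inv_anti₀ hpos key).trans_eq ?_
  rw [mul_inv, mul_inv, ← Real.exp_neg, ← Real.exp_neg, neg_neg, neg_mul]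
  ring

lemma log_bound {β c μ x : ℝ} (hβ : 0 < β) (hc : c < 0) (hμ : μ ≤ c) (hx : 0 ≤ x) :
    |Real.log (1 - Real.exp (-(β * (x - μ))))| ≤
      (1 - Real.exp (β * c))⁻¹ * (Real.exp (β * c) * Real.exp (-β * x)) := by
  set u := Real.exp (-(β * (x - μ))) with hu
  have hg : Real.exp (β * c) < 1 := Real.exp_lt_one_iff.2 (by nlinarith)
  have hu1 : u ≤ Real.exp (β * c) := Real.exp_le_exp.2 (by nlinarith)
  have hu0 : 0 < u := Real.exp_pos _
  have h1u : 0 < 1 - u := by linarith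
  have hlogneg : Real.log (1 - u) ≤ 0 := Real.log_nonpos (by linarith) (by linarith)
  rw [abs_of_nonpos hlogneg]
  have hls : Real.log (1 - u)⁻¹ ≤ (1 - u)⁻¹ - 1 := by
    have := Real.log_le_sub_one_of_pos (inv_pos.2 h1u)
    linarith
  rw [Real.log_inv] at hls
  have e1 : (1 - u)⁻¹ - 1 = u * (1 - u)⁻¹ := by field_simp; ring
  have h2 : u * (1 - u)⁻¹ ≤ u * (1 - Real.exp (β * c))⁻¹ := by
    apply mul_le_mul_of_nonneg_left _ hu0.le
    apply inv_anti₀ (by linarith) (by linarith)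
  have h3 : u ≤ Real.exp (β * c) * Real.exp (-β * x) := by
    rw [hu, ← Real.exp_add]; exact Real.exp_le_exp.2 (by nlinarith)
  have h4 : u * (1 - Real.exp (β * c))⁻¹
      ≤ (Real.exp (β * c) * Real.exp (-β * x)) * (1 - Real.exp (β * c))⁻¹ :=
    mul_le_mul_of_nonneg_right h3 (inv_nonneg.2 (by linarith))
  calc -Real.log (1 - u) ≤ (1 - u)⁻¹ - 1 := by linarith
    _ = u * (1 - u)⁻¹ := e1
    _ ≤ u * (1 - Real.exp (β * c))⁻¹ := h2
    _ ≤ _ := by rw [mul_comm] at h4 ⊢; exact h4.trans_eq (by ring)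


variable {ν : ℕ} {β : ℝ}

lemma exp_arg_pos {μ : ℝ} (hβ : 0 < β) (hμ : μ < 0) (k : EuclideanSpace ℝ (Fin ν)) :
    0 < β * (‖k‖ ^ 2 - μ) := by
  have : 0 ≤ ‖k‖ ^ 2 := sq_nonneg _
  nlinarith

lemma denom_pos {μ : ℝ} (hβ : 0 < β) (hμ : μ < 0) (k : EuclideanSpace ℝ (Fin ν)) :
    0 < Real.exp (β * (‖k‖ ^ 2 - μ)) - 1 := by
  have h := Real.one_lt_exp_iff.2 (exp_arg_pos hβ hμ k)
  linarith

lemma cont_inv {μ : ℝ} (hβ : 0 < β) (hμ : μ < 0) :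
    Continuous fun k : EuclideanSpace ℝ (Fin ν) => (Real.exp (β * (‖k‖ ^ 2 - μ)) - 1)⁻¹ := by
  apply Continuous.inv₀
  · fun_prop
  · intro k; exact ne_of_gt (denom_pos hβ hμ k)

lemma one_sub_exp_pos {μ : ℝ} (hβ : 0 < β) (hμ : μ < 0) (k : EuclideanSpace ℝ (Fin ν)) :
    0 < 1 - Real.exp (-(β * (‖k‖ ^ 2 - μ))) := by
  have h := exp_arg_pos hβ hμ (k := k)
  have : Real.exp (-(β * (‖k‖ ^ 2 - μ))) < 1 := Real.exp_lt_one_iff.2 (by linarith)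
  linarith

lemma cont_log {μ : ℝ} (hβ : 0 < β) (hμ : μ < 0) :
    Continuous fun k : EuclideanSpace ℝ (Fin ν) =>
      Real.log (1 - Real.exp (-(β * (‖k‖ ^ 2 - μ)))) := by
  apply Continuous.log
  · fun_prop
  · intro k; exact ne_of_gt (one_sub_exp_pos hβ hμ k)

lemma int_inv {μ : ℝ} (hβ : 0 < β) (hμ : μ < 0) :
    Integrable fun k : EuclideanSpace ℝ (Fin ν) => (Real.exp (β * (‖k‖ ^ 2 - μ)) - 1)⁻¹ := by
  refine Integrable.mono' (((integrable_gauss ν hβ).const_mul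
    ((1 - Real.exp (β * μ))⁻¹ * Real.exp (β * μ))) )
    (cont_inv hβ hμ).aestronglyMeasurable (Eventually.of_forall fun k => ?_)
  have hb := inv_bound (c := μ) hβ hμ le_rfl (sq_nonneg ‖k‖)
  rw [Real.norm_eq_abs, abs_of_pos (inv_pos.2 (denom_pos hβ hμ k))]
  calc (Real.exp (β * (‖k‖ ^ 2 - μ)) - 1)⁻¹
      ≤ (1 - Real.exp (β * μ))⁻¹ * (Real.exp (β * μ) * Real.exp (-β * ‖k‖ ^ 2)) := hb
    _ = (1 - Real.exp (β * μ))⁻¹ * Real.exp (β * μ) * Real.exp (-β * ‖k‖ ^ 2) := by ring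

lemma int_log {μ : ℝ} (hβ : 0 < β) (hμ : μ < 0) :
    Integrable fun k : EuclideanSpace ℝ (Fin ν) =>
      Real.log (1 - Real.exp (-(β * (‖k‖ ^ 2 - μ)))) := by
  refine Integrable.mono' (((integrable_gauss ν hβ).const_mul
    ((1 - Real.exp (β * μ))⁻¹ * Real.exp (β * μ))) )
    (cont_log hβ hμ).aestronglyMeasurable (Eventually.of_forall fun k => ?_)
  have hb := log_bound (c := μ) hβ hμ le_rfl (sq_nonneg ‖k‖)
  rw [Real.norm_eq_abs]
  exact hb.trans_eq (by ring)

lemma pP_nonneg {μ : ℝ} (hβ : 0 < β) (hμ : μ < 0) : 0 ≤ pP ν β μ := by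
  have hcoef : 0 < 1 / (β * (2 * Real.pi) ^ ν) := by positivity
  have hint : (∫ k : EuclideanSpace ℝ (Fin ν),
      Real.log (1 - Real.exp (-(β * (‖k‖ ^ 2 - μ))))) ≤ 0 := by
    apply integral_nonpos
    intro k
    exact Real.log_nonpos (one_sub_exp_pos hβ hμ k).le
      (by have := Real.exp_pos (-(β * (‖k‖ ^ 2 - μ))); linarith)
  unfold pP
  nlinarith

lemma rhoP_nonneg {μ : ℝ} (hβ : 0 < β) (hμ : μ < 0) : 0 ≤ rhoP ν β μ := by
  have hint : 0 ≤ ∫ k : EuclideanSpace ℝ (Fin ν), (Real.exp (β * (‖k‖ ^ 2 - μ)) - 1)⁻¹ :=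
    integral_nonneg fun k => (inv_pos.2 (denom_pos hβ hμ k)).le
  have : (0:ℝ) < (2 * Real.pi) ^ ν := by positivity
  unfold rhoP
  positivity

lemma rhoP_mono (hβ : 0 < β) {μ₁ μ₂ : ℝ} (h1 : μ₁ ≤ μ₂) (h2 : μ₂ < 0) :
    rhoP ν β μ₁ ≤ rhoP ν β μ₂ := by
  have hμ₁ : μ₁ < 0 := lt_of_le_of_lt h1 h2
  unfold rhoP
  apply mul_le_mul_of_nonneg_left _ (by positivity)
  apply integral_mono (int_inv hβ hμ₁) (int_inv hβ h2)
  intro k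
  have := denom_pos hβ h2 (k := k)
  apply inv_anti₀ this
  have : β * (‖k‖ ^ 2 - μ₂) ≤ β * (‖k‖ ^ 2 - μ₁) := by nlinarith
  have := Real.exp_le_exp.2 this
  linarith


lemma deriv_pointwise (hβ : 0 < β) {μ : ℝ} (hμ : μ < 0) (k : EuclideanSpace ℝ (Fin ν)) :
    HasDerivAt (fun μ' => Real.log (1 - Real.exp (-(β * (‖k‖ ^ 2 - μ')))))
      (-(β * (Real.exp (β * (‖k‖ ^ 2 - μ)) - 1)⁻¹)) μ := by
  set x := ‖k‖ ^ 2 with hx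
  have h1 : HasDerivAt (fun μ' : ℝ => -(β * (x - μ'))) β μ := by
    have : HasDerivAt (fun μ' : ℝ => β * μ' - β * x) β μ := by
      simpa using ((hasDerivAt_id μ).const_mul β).sub_const (β * x)
    convert this using 2 with μ'
    ring
  have h2 := h1.exp
  have h3 := h2.const_sub 1
  have h4 := h3.log (ne_of_gt (one_sub_exp_pos hβ hμ k))
  convert h4 using 1
  have hd := denom_pos hβ hμ k
  have h1u := one_sub_exp_pos hβ hμ k
  rw [Real.exp_neg] at *
  have hE : Real.exp (β * (x - μ)) ≠ 0 := Real.exp_ne_zero _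
  field_simp

lemma pP_hasDerivAt (hβ : 0 < β) {μ₀ : ℝ} (hμ₀ : μ₀ < 0) :
    HasDerivAt (pP ν β) (rhoP ν β μ₀) μ₀ := by
  set c := μ₀ / 2 with hc
  have hc0 : c < 0 := by rw [hc]; linarith
  set bound : EuclideanSpace ℝ (Fin ν) → ℝ := fun k =>
    β * ((1 - Real.exp (β * c))⁻¹ * (Real.exp (β * c) * Real.exp (-β * ‖k‖ ^ 2))) with hbdef
  have hF_meas : ∀ᶠ μ in nhds μ₀, AEStronglyMeasurable
      (fun k : EuclideanSpace ℝ (Fin ν) => Real.log (1 - Real.exp (-(β * (‖k‖ ^ 2 - μ))))) volume := by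
    filter_upwards [Iio_mem_nhds hμ₀] with μ hμ
    exact (cont_log hβ hμ).aestronglyMeasurable
  have hF'_meas : AEStronglyMeasurable
      (fun k : EuclideanSpace ℝ (Fin ν) => -(β * (Real.exp (β * (‖k‖ ^ 2 - μ₀)) - 1)⁻¹)) volume :=
    ((continuous_const.mul (cont_inv hβ hμ₀)).neg).aestronglyMeasurable
  have h_bound : ∀ᵐ k : EuclideanSpace ℝ (Fin ν), ∀ μ ∈ Metric.ball μ₀ (-μ₀ / 2),
      ‖-(β * (Real.exp (β * (‖k‖ ^ 2 - μ)) - 1)⁻¹)‖ ≤ bound k := by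
    refine Eventually.of_forall fun k => fun μ hμ => ?_
    have hμc : μ ≤ c := by
      have := mem_ball_iff_norm.1 hμ
      rw [Real.norm_eq_abs, abs_lt] at this
      rw [hc]; linarith [this.2]
    have hμ0 : μ < 0 := lt_of_le_of_lt hμc hc0
    have hb := inv_bound (c := c) hβ hc0 hμc (sq_nonneg ‖k‖)
    have hpos : 0 < β * (Real.exp (β * (‖k‖ ^ 2 - μ)) - 1)⁻¹ :=
      mul_pos hβ (inv_pos.2 (denom_pos hβ hμ0 k))
    rw [norm_neg, Real.norm_eq_abs, abs_of_pos hpos, hbdef]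
    exact mul_le_mul_of_nonneg_left hb hβ.le
  have hbint : Integrable bound volume := by
    rw [hbdef]
    have : (fun k : EuclideanSpace ℝ (Fin ν) =>
        β * ((1 - Real.exp (β * c))⁻¹ * (Real.exp (β * c) * Real.exp (-β * ‖k‖ ^ 2))))
        = fun k : EuclideanSpace ℝ (Fin ν) =>
          (β * ((1 - Real.exp (β * c))⁻¹ * Real.exp (β * c))) * Real.exp (-β * ‖k‖ ^ 2) := by
      funext k; ring
    rw [this]
    exact (integrable_gauss ν hβ).const_mul _
  have h_diff : ∀ᵐ k : EuclideanSpace ℝ (Fin ν), ∀ μ ∈ Metric.ball μ₀ (-μ₀ / 2),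
      HasDerivAt (fun μ' => Real.log (1 - Real.exp (-(β * (‖k‖ ^ 2 - μ')))))
        (-(β * (Real.exp (β * (‖k‖ ^ 2 - μ)) - 1)⁻¹)) μ := by
    refine Eventually.of_forall fun k => fun μ hμ => ?_
    have hμ0 : μ < 0 := by
      have := mem_ball_iff_norm.1 hμ
      rw [Real.norm_eq_abs, abs_lt] at this
      linarith [this.2]
    exact deriv_pointwise hβ hμ0 k
  have key := hasDerivAt_integral_of_dominated_loc_of_deriv_le (μ := volume)
    (F := fun μ (k : EuclideanSpace ℝ (Fin ν)) =>
      Real.log (1 - Real.exp (-(β * (‖k‖ ^ 2 - μ)))))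
    (F' := fun μ (k : EuclideanSpace ℝ (Fin ν)) =>
      -(β * (Real.exp (β * (‖k‖ ^ 2 - μ)) - 1)⁻¹))
    (x₀ := μ₀) (s := Metric.ball μ₀ (-μ₀ / 2)) (bound := bound)
    (Metric.ball_mem_nhds _ (by linarith)) hF_meas (int_log hβ hμ₀) hF'_meas h_bound hbint h_diff
  have hD := key.2
  have hInt : (∫ k : EuclideanSpace ℝ (Fin ν),
        -(β * (Real.exp (β * (‖k‖ ^ 2 - μ₀)) - 1)⁻¹))
      = -(β * ∫ k : EuclideanSpace ℝ (Fin ν), (Real.exp (β * (‖k‖ ^ 2 - μ₀)) - 1)⁻¹) := by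
    simp_rw [integral_neg, ← smul_eq_mul, integral_smul]
  rw [hInt] at hD
  have h2 := hD.const_mul (-(1 / (β * (2 * Real.pi) ^ ν)))
  refine h2.congr_deriv ?_
  have hT : ((2 : ℝ) * Real.pi) ^ ν ≠ 0 := by positivity
  rw [rhoP]
  field_simp

lemma rhoP_contAt (hβ : 0 < β) {μ₀ : ℝ} (hμ₀ : μ₀ < 0) :
    ContinuousAt (rhoP ν β) μ₀ := by
  set c := μ₀ / 2 with hc
  have hc0 : c < 0 := by rw [hc]; linarith
  have hμc : μ₀ < c := by rw [hc]; linarith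
  have hI : ContinuousAt (fun μ => ∫ k : EuclideanSpace ℝ (Fin ν),
      (Real.exp (β * (‖k‖ ^ 2 - μ)) - 1)⁻¹) μ₀ := by
    apply continuousAt_of_dominated (bound := fun k =>
      (1 - Real.exp (β * c))⁻¹ * (Real.exp (β * c) * Real.exp (-β * ‖k‖ ^ 2)))
    · filter_upwards [Iio_mem_nhds hμ₀] with μ hμ
      exact (cont_inv hβ hμ).aestronglyMeasurable
    · filter_upwards [Iio_mem_nhds hμc] with μ hμ
      refine Eventually.of_forall fun k => ?_
      have hμ0 : μ < 0 := lt_trans hμ hc0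
      rw [Real.norm_eq_abs, abs_of_pos (inv_pos.2 (denom_pos hβ hμ0 k))]
      exact inv_bound hβ hc0 hμ.le (sq_nonneg ‖k‖)
    · have : (fun k : EuclideanSpace ℝ (Fin ν) =>
          (1 - Real.exp (β * c))⁻¹ * (Real.exp (β * c) * Real.exp (-β * ‖k‖ ^ 2)))
          = fun k : EuclideanSpace ℝ (Fin ν) =>
            ((1 - Real.exp (β * c))⁻¹ * Real.exp (β * c)) * Real.exp (-β * ‖k‖ ^ 2) := by
        funext k; ring
      rw [this]
      exact (integrable_gauss ν hβ).const_mul _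
    · refine Eventually.of_forall fun k => ?_
      have hd : ContinuousAt (fun μ : ℝ => Real.exp (β * (‖k‖ ^ 2 - μ)) - 1) μ₀ := by fun_prop
      exact hd.inv₀ (ne_of_gt (denom_pos hβ hμ₀ k))
  exact hI.const_mul _


lemma g_hasDerivAt (hβ : 0 < β) {ρ μ' : ℝ} (hμ' : μ' < 0) :
    HasDerivAt (fun x => ρ * x - pP ν β x) (ρ - rhoP ν β μ') μ' :=
  ((hasDerivAt_id μ').const_mul ρ |>.sub (pP_hasDerivAt hβ hμ')).congr_deriv (by ring)

lemma fP_nonempty {Δ ρ : ℝ} :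
    ((fun μ => ρ * μ - pP ν β μ) '' Set.Iic (-Δ)).Nonempty :=
  ⟨_, ⟨-Δ, Set.mem_Iic.2 le_rfl, rfl⟩⟩

lemma fP_bddAbove (hβ : 0 < β) {Δ ρ : ℝ} (hΔ : 0 < Δ) (hρ : 0 ≤ ρ) :
    BddAbove ((fun μ => ρ * μ - pP ν β μ) '' Set.Iic (-Δ)) := by
  refine ⟨0, fun y hy => ?_⟩
  obtain ⟨μ', hμ', rfl⟩ := hy
  have h1 : μ' < 0 := lt_of_le_of_lt hμ' (by linarith)
  have h2 : ρ * μ' ≤ 0 := mul_nonpos_iff.2 (Or.inl ⟨hρ, h1.le⟩)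
  have := pP_nonneg (ν := ν) hβ h1
  simp only [Set.mem_setOf_eq]
  linarith

lemma fP_ge (hβ : 0 < β) {Δ ρ : ℝ} (hΔ : 0 < Δ) (hρ : 0 ≤ ρ) :
    ρ * (-Δ) - pP ν β (-Δ) ≤ fP ν β Δ ρ :=
  le_csSup (fP_bddAbove hβ hΔ hρ) ⟨-Δ, Set.mem_Iic.2 le_rfl, rfl⟩

lemma fP_eq_of_ge (hβ : 0 < β) {Δ ρ : ℝ} (hΔ : 0 < Δ) (hρ0 : 0 ≤ ρ)
    (hρ : rhoP ν β (-Δ) ≤ ρ) :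
    fP ν β Δ ρ = ρ * (-Δ) - pP ν β (-Δ) := by
  have hΔ0 : -Δ < 0 := by linarith
  have hmono : MonotoneOn (fun x => ρ * x - pP ν β x) (Set.Iic (-Δ)) := by
    apply monotoneOn_of_hasDerivWithinAt_nonneg (f' := fun x => ρ - rhoP ν β x) (convex_Iic _)
    · intro x hx
      have hx0 : x < 0 := lt_of_le_of_lt hx hΔ0
      exact (g_hasDerivAt hβ hx0).continuousAt.continuousWithinAt
    · intro x hx
      rw [interior_Iic] at hx
      exact (g_hasDerivAt hβ (lt_trans hx hΔ0)).hasDerivWithinAt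
    · intro x hx
      rw [interior_Iic] at hx
      have := rhoP_mono (ν := ν) hβ hx.le hΔ0
      linarith
  apply IsGreatest.csSup_eq
  constructor
  · exact ⟨-Δ, Set.mem_Iic.2 le_rfl, rfl⟩
  · rintro y ⟨μ', hμ', rfl⟩
    exact hmono hμ' (Set.mem_Iic.2 le_rfl) hμ'

lemma fP_eq_gap (hβ : 0 < β) {Δ Δ' ρ : ℝ} (hΔ : 0 < Δ) (h : Δ ≤ Δ') (hρ0 : 0 ≤ ρ)
    (hρ : ρ ≤ rhoP ν β (-Δ')) :
    fP ν β Δ ρ = fP ν β Δ' ρ := by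
  have hΔ' : 0 < Δ' := lt_of_lt_of_le hΔ h
  have hΔ'0 : -Δ' < 0 := by linarith
  apply le_antisymm
  · -- every g(μ'), μ' ≤ -Δ, is ≤ fP Δ' ρ
    apply csSup_le fP_nonempty
    rintro y ⟨μ', hμ', rfl⟩
    by_cases hcase : μ' ≤ -Δ'
    · exact le_csSup (fP_bddAbove hβ hΔ' hρ0) ⟨μ', hcase, rfl⟩
    · push_neg at hcase
      have hanti : AntitoneOn (fun x => ρ * x - pP ν β x) (Set.Icc (-Δ') (-Δ)) := by
        apply antitoneOn_of_hasDerivWithinAt_nonpos (f' := fun x => ρ - rhoP ν β x)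
          (convex_Icc _ _)
        · intro x hx
          have hx0 : x < 0 := lt_of_le_of_lt hx.2 (by linarith)
          exact (g_hasDerivAt hβ hx0).continuousAt.continuousWithinAt
        · intro x hx
          rw [interior_Icc] at hx
          exact (g_hasDerivAt hβ (lt_trans hx.2 (by linarith))).hasDerivWithinAt
        · intro x hx
          rw [interior_Icc] at hx
          have hx0 : x < 0 := by have := hx.2; linarith
          have := rhoP_mono (ν := ν) hβ hx.1.le hx0
          linarith
      have h1 : ρ * μ' - pP ν β μ' ≤ ρ * (-Δ') - pP ν β (-Δ') :=
        hanti ⟨le_rfl, by linarith⟩ ⟨hcase.le, hμ'⟩ hcase.le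
      exact h1.trans (le_csSup (fP_bddAbove hβ hΔ' hρ0) ⟨-Δ', Set.mem_Iic.2 le_rfl, rfl⟩)
  · exact csSup_le_csSup (fP_bddAbove hβ hΔ hρ0) fP_nonempty
      (Set.image_mono (Set.Iic_subset_Iic.2 (by linarith)))

variable {lam μ : ℝ}

lemma pMF_nonempty {Δ : ℝ} :
    ((fun ρ => μ * ρ - fP ν β Δ ρ - lam * ρ ^ 2 / 2) '' Set.Ici 0).Nonempty :=
  ⟨_, ⟨0, Set.mem_Ici.2 le_rfl, rfl⟩⟩

lemma pMF_le_aux (hβ : 0 < β) (hlam : 0 < lam) {Δ ρ : ℝ} (hΔ : 0 < Δ) (hρ : 0 ≤ ρ) :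
    μ * ρ - fP ν β Δ ρ - lam * ρ ^ 2 / 2 ≤ pP ν β (-Δ) + (μ + Δ) ^ 2 / (2 * lam) := by
  have h1 := fP_ge (ν := ν) hβ hΔ hρ
  have key : (μ + Δ) * ρ - lam * ρ ^ 2 / 2 ≤ (μ + Δ) ^ 2 / (2 * lam) := by
    rw [le_div_iff₀ (by positivity : (0:ℝ) < 2 * lam)]
    nlinarith [sq_nonneg (μ + Δ - lam * ρ)]
  have h2 : μ * ρ - (ρ * (-Δ) - pP ν β (-Δ)) - lam * ρ ^ 2 / 2
      ≤ pP ν β (-Δ) + (μ + Δ) ^ 2 / (2 * lam) := by linarith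
  linarith

lemma pMF_bddAbove (hβ : 0 < β) (hlam : 0 < lam) {Δ : ℝ} (hΔ : 0 < Δ) :
    BddAbove ((fun ρ => μ * ρ - fP ν β Δ ρ - lam * ρ ^ 2 / 2) '' Set.Ici 0) := by
  refine ⟨pP ν β (-Δ) + (μ + Δ) ^ 2 / (2 * lam), fun y hy => ?_⟩
  obtain ⟨ρ, hρ, rfl⟩ := hy
  exact pMF_le_aux hβ hlam hΔ hρ

lemma pMF_eq_case1 (hβ : 0 < β) (hlam : 0 < lam) {Δ : ℝ} (hΔ : 0 < Δ)
    (hcond : -Δ + lam * rhoP ν β (-Δ) ≤ μ) :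
    pMF ν β lam Δ μ = pP ν β (-Δ) + (μ + Δ) ^ 2 / (2 * lam) := by
  have hΔ0 : -Δ < 0 := by linarith
  set ρs := (μ + Δ) / lam with hρs
  have hRρ : rhoP ν β (-Δ) ≤ ρs := by
    rw [hρs, le_div_iff₀ hlam]
    nlinarith
  have hρ0 : 0 ≤ ρs := le_trans (rhoP_nonneg hβ hΔ0) hRρ
  apply IsGreatest.csSup_eq
  constructor
  · refine ⟨ρs, Set.mem_Ici.2 hρ0, ?_⟩
    show μ * ρs - fP ν β Δ ρs - lam * ρs ^ 2 / 2 = _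
    rw [fP_eq_of_ge hβ hΔ hρ0 hRρ, hρs]
    field_simp
    ring
  · rintro y ⟨ρ, hρ, rfl⟩
    exact pMF_le_aux hβ hlam hΔ hρ

lemma pMF_mono (hβ : 0 < β) (hlam : 0 < lam) {Δ Δ' : ℝ} (hΔ : 0 < Δ) (h : Δ ≤ Δ') :
    pMF ν β lam Δ μ ≤ pMF ν β lam Δ' μ := by
  have hΔ' : 0 < Δ' := lt_of_lt_of_le hΔ h
  apply csSup_le pMF_nonempty
  rintro y ⟨ρ, hρ, rfl⟩
  have hfP : fP ν β Δ' ρ ≤ fP ν β Δ ρ :=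
    csSup_le_csSup (fP_bddAbove hβ hΔ hρ) fP_nonempty
      (Set.image_mono (Set.Iic_subset_Iic.2 (by linarith)))
  have : μ * ρ - fP ν β Δ ρ - lam * ρ ^ 2 / 2 ≤ μ * ρ - fP ν β Δ' ρ - lam * ρ ^ 2 / 2 := by
    linarith
  exact this.trans (le_csSup (pMF_bddAbove hβ hlam hΔ') ⟨ρ, hρ, rfl⟩)

lemma pMF_eq_case2 (hβ : 0 < β) (hlam : 0 < lam) {Δ Δ' : ℝ} (hΔ : 0 < Δ) (h : Δ ≤ Δ')
    (hcond : μ + Δ' ≤ lam * rhoP ν β (-Δ')) :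
    pMF ν β lam Δ μ = pMF ν β lam Δ' μ := by
  have hΔ' : 0 < Δ' := lt_of_lt_of_le hΔ h
  have hΔ'0 : -Δ' < 0 := by linarith
  set R' := rhoP ν β (-Δ') with hR'
  have hR'0 : 0 ≤ R' := rhoP_nonneg hβ hΔ'0
  refine le_antisymm (pMF_mono hβ hlam hΔ h) ?_
  apply csSup_le pMF_nonempty
  rintro y ⟨ρ, hρ, rfl⟩
  have key : ∀ σ : ℝ, 0 ≤ σ → σ ≤ R' →
      μ * σ - fP ν β Δ' σ - lam * σ ^ 2 / 2 ≤ pMF ν β lam Δ μ := by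
    intro σ hσ0 hσR
    rw [← fP_eq_gap hβ hΔ h hσ0 hσR]
    exact le_csSup (pMF_bddAbove hβ hlam hΔ) ⟨σ, Set.mem_Ici.2 hσ0, rfl⟩
  rcases le_or_gt ρ R' with hcase | hcase
  · exact key ρ hρ hcase
  · have h1 : fP ν β Δ' ρ = ρ * (-Δ') - pP ν β (-Δ') :=
      fP_eq_of_ge hβ hΔ' (le_trans hR'0 hcase.le) (le_of_lt hcase)
    have h2 : fP ν β Δ' R' = R' * (-Δ') - pP ν β (-Δ') :=
      fP_eq_of_ge hβ hΔ' hR'0 le_rfl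
    have h3 : μ * ρ - fP ν β Δ' ρ - lam * ρ ^ 2 / 2
        ≤ μ * R' - fP ν β Δ' R' - lam * R' ^ 2 / 2 := by
      rw [h1, h2]
      nlinarith [mul_le_mul_of_nonneg_right hcond (sub_nonneg.2 hcase.le),
        sq_nonneg (ρ - R'), mul_pos hlam (sub_pos.2 hcase)]
    exact h3.trans (key R' hR'0 le_rfl)

end Aux

/-- **Condensate density of the mean-field Bose gas.** Fix `β > 0`, `λ > 0`, `μ ∈ ℝ`,
`ν ≥ 1`. The map `Δ ↦ p_λ^Δ(β,μ)` is differentiable at every `Δ₀ > 0` with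
`μ ≠ -Δ₀ + λ ρ^P(β,-Δ₀)`; its derivative equals `(μ + Δ₀)/λ - ρ^P(β,-Δ₀)` if
`μ > -Δ₀ + λ ρ^P(β,-Δ₀)`, and `0` if `μ < -Δ₀ + λ ρ^P(β,-Δ₀)`. -/
theorem mean_field_condensate_density
    (ν : ℕ) (hν : 1 ≤ ν) (β : ℝ) (hβ : 0 < β) (lam : ℝ) (hlam : 0 < lam) (μ : ℝ)
    (Δ₀ : ℝ) (hΔ₀ : 0 < Δ₀) (hne : μ ≠ -Δ₀ + lam * rhoP ν β (-Δ₀)) :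
    (-Δ₀ + lam * rhoP ν β (-Δ₀) < μ →
      HasDerivAt (fun Δ : ℝ => pMF ν β lam Δ μ)
        ((μ + Δ₀) / lam - rhoP ν β (-Δ₀)) Δ₀) ∧
    (μ < -Δ₀ + lam * rhoP ν β (-Δ₀) →
      HasDerivAt (fun Δ : ℝ => pMF ν β lam Δ μ) 0 Δ₀) := by
  have hΔ₀0 : -Δ₀ < 0 := by linarith
  have hfcont : ContinuousAt (fun Δ : ℝ => -Δ + lam * rhoP ν β (-Δ)) Δ₀ := by
    have h1 : ContinuousAt (fun Δ : ℝ => rhoP ν β (-Δ)) Δ₀ :=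
      (rhoP_contAt hβ hΔ₀0).comp continuous_neg.continuousAt
    exact (continuousAt_id.neg).add (continuousAt_const.mul h1)
  have ev0 : ∀ᶠ Δ : ℝ in nhds Δ₀, 0 < Δ :=
    eventually_of_mem (Ioi_mem_nhds hΔ₀) fun x hx => hx
  constructor
  · intro hcond
    have ev1 : ∀ᶠ Δ : ℝ in nhds Δ₀, -Δ + lam * rhoP ν β (-Δ) < μ :=
      eventually_of_mem (hfcont.preimage_mem_nhds (Iio_mem_nhds hcond)) fun x hx => hx
    have heq : (fun Δ : ℝ => pMF ν β lam Δ μ) =ᶠ[nhds Δ₀]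
        fun Δ : ℝ => pP ν β (-Δ) + (μ + Δ) ^ 2 / (2 * lam) := by
      filter_upwards [ev0, ev1] with Δ h0 h1
      exact pMF_eq_case1 hβ hlam h0 h1.le
    have h1 : HasDerivAt (fun Δ : ℝ => -Δ) (-1) Δ₀ := (hasDerivAt_id Δ₀).neg
    have h2 : HasDerivAt (fun Δ : ℝ => pP ν β (-Δ)) (rhoP ν β (-Δ₀) * (-1)) Δ₀ :=
      HasDerivAt.comp (h₂ := pP ν β) Δ₀ (pP_hasDerivAt (ν := ν) hβ hΔ₀0) h1
    have h3 : HasDerivAt (fun Δ : ℝ => (μ + Δ) ^ 2) (2 * (μ + Δ₀)) Δ₀ := by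
      have := ((hasDerivAt_id Δ₀).const_add μ).pow 2
      simp at this; exact this
    have h4 := h2.add (h3.div_const (2 * lam))
    have h5 : HasDerivAt (fun Δ : ℝ => pP ν β (-Δ) + (μ + Δ) ^ 2 / (2 * lam))
        ((μ + Δ₀) / lam - rhoP ν β (-Δ₀)) Δ₀ := by
      refine h4.congr_deriv ?_
      field_simp
      ring
    exact h5.congr_of_eventuallyEq heq
  · intro hcond
    have ev1 : ∀ᶠ Δ : ℝ in nhds Δ₀, μ < -Δ + lam * rhoP ν β (-Δ) :=
      eventually_of_mem (hfcont.preimage_mem_nhds (Ioi_mem_nhds hcond)) fun x hx => hx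
    have heq : (fun Δ : ℝ => pMF ν β lam Δ μ) =ᶠ[nhds Δ₀]
        fun _ : ℝ => pMF ν β lam Δ₀ μ := by
      filter_upwards [ev0, ev1] with Δ h0 h1
      rcases le_total Δ Δ₀ with hle | hle
      · exact pMF_eq_case2 hβ hlam h0 hle (by linarith)
      · exact (pMF_eq_case2 hβ hlam hΔ₀ hle (by linarith)).symm
    exact (hasDerivAt_const Δ₀ (pMF ν β lam Δ₀ μ)).congr_of_eventuallyEq heq
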